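/- For all natural numbers n and k, the number of bilateral Motzkin paths of length n with exactly k steps in {U, O1} equals binomial(n, k)². That is, the number of step words r : {1,...,n} → {U, D, O1, O2} whose heights satisfy H_n = 0 and which have exactly k steps equal to U or O1 is C(n,k)². -/

import Mathlib

/-!
A step is a pair of bits: whether it lies in `{U, O1}` and whether it lies in `{D, O1}`. So a
step word of length `n` is the same as a pair of subsets `(A, B)` of the positions, and its
final height is `#A - #B`, since `U = (1, 0)`, `D = (0, 1)`, and `O1 = (1, 1)`, `O2 = (0, 0)`
have weights `1 - 0`, `0 - 1`, `1 - 1`, `0 - 0`. Bilateral Motzkin paths with `k` steps in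
`{U, O1}` are therefore the pairs with `#A = #B = k`, of which there are `C(n, k)²`.
-/

/-- The four kinds of steps: up, down, and two colors of horizontal steps. -/
inductive Step where
  | U : Step
  | D : Step
  | O1 : Step
  | O2 : Step
deriving DecidableEq

instance : Fintype Step where
  elems := {Step.U, Step.D, Step.O1, Step.O2}
  complete := by intro x; cases x <;> simp

/-- Weight of a step: U has weight 1, D has weight −1, O1 and O2 weight 0. -/
def Step.wt : Step → ℤ
  | .U => 1
  | .D => -1
  | .O1 => 0
  | .O2 => 0

/-- Height of a step word after its first `i` steps. -/
def stepHeight {n : ℕ} (r : Fin n → Step) (i : ℕ) : ℤ :=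
  ∑ j ∈ Finset.univ.filter (fun j : Fin n => (j : ℕ) < i), (r j).wt

/-- Partial sum of a `±1`-sequence after its first `i` entries. -/
def partialSum {n : ℕ} (p : Fin n → ℤ) (i : ℕ) : ℤ :=
  ∑ j ∈ Finset.univ.filter (fun j : Fin n => (j : ℕ) < i), p j

open Finset

def Step.ofBits : Bool → Bool → Step
  | true, false => .U
  | false, true => .D
  | true, true => .O1
  | false, false => .O2

namespace Step

theorem ofBits_eq_U_or_O1 (a b : Bool) : ofBits a b = U ∨ ofBits a b = O1 ↔ a = true := by
  cases a <;> cases b <;> simp [ofBits]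

theorem ofBits_eq_D_or_O1 (a b : Bool) : ofBits a b = D ∨ ofBits a b = O1 ↔ b = true := by
  cases a <;> cases b <;> simp [ofBits]

theorem ofBits_decide (s : Step) :
    ofBits (decide (s = U ∨ s = O1)) (decide (s = D ∨ s = O1)) = s := by
  cases s <;> rfl

theorem wt_eq_ite_sub_ite (s : Step) :
    s.wt = (if s = U ∨ s = O1 then 1 else 0) - (if s = D ∨ s = O1 then 1 else 0) := by
  cases s <;> rfl

end Step

section StepWord

variable {n : ℕ}

def upOrO1Set (r : Fin n → Step) : Finset (Fin n) := {i | r i = .U ∨ r i = .O1}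

def downOrO1Set (r : Fin n → Step) : Finset (Fin n) := {i | r i = .D ∨ r i = .O1}

def stepWordEquivFinsetProd : (Fin n → Step) ≃ Finset (Fin n) × Finset (Fin n) where
  toFun r := (upOrO1Set r, downOrO1Set r)
  invFun p i := Step.ofBits (i ∈ p.1) (i ∈ p.2)
  left_inv r := funext fun i => by simpa [upOrO1Set, downOrO1Set] using Step.ofBits_decide (r i)
  right_inv p := by
    ext i <;> simp [upOrO1Set, downOrO1Set, Step.ofBits_eq_U_or_O1, Step.ofBits_eq_D_or_O1]

theorem stepHeight_eq_card_sub_card (r : Fin n → Step) :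
    stepHeight r n = #(upOrO1Set r) - #(downOrO1Set r) := by
  have h_all : ({j : Fin n | (j : ℕ) < n} : Finset (Fin n)) = univ :=
    filter_true_of_mem fun j _ => j.isLt
  simp only [stepHeight, h_all, upOrO1Set, downOrO1Set, card_filter, Nat.cast_sum,
    Nat.cast_ite, Nat.cast_one, Nat.cast_zero, ← sum_sub_distrib, Step.wt_eq_ite_sub_ite]

end StepWord

theorem card_finset_prod_card_eq {α : Type*} [Fintype α] (k : ℕ) :
    Nat.card {p : Finset α × Finset α // #p.1 = k ∧ #p.2 = k} = (Fintype.card α).choose k ^ 2 := by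
  rw [Nat.card_congr (Equiv.subtypeProdEquivProd (p := fun A : Finset α => #A = k)
      (q := fun B => #B = k)), Nat.card_prod, Nat.card_eq_fintype_card,
    Fintype.card_finset_len, sq]

/-- The number of bilateral Motzkin paths of length $n$ with exactly $k$ steps
in $\{U, O_1\}$ is $\binom{n}{k}^2$. -/
theorem card_bilateralMotzkin (n k : ℕ) :
    Nat.card {r : Fin n → Step //
        stepHeight r n = 0 ∧
        (Finset.univ.filter fun i => r i = Step.U ∨ r i = Step.O1).card = k}
      = Nat.choose n k ^ 2 := by
  have e : {r : Fin n → Step // stepHeight r n = 0 ∧ #(upOrO1Set r) = k} ≃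
      {p : Finset (Fin n) × Finset (Fin n) // #p.1 = k ∧ #p.2 = k} :=
    stepWordEquivFinsetProd.subtypeEquiv fun r => by
      simp only [stepWordEquivFinsetProd, Equiv.coe_fn_mk, stepHeight_eq_card_sub_card]
      omega
  exact (Nat.card_congr e).trans (by rw [card_finset_prod_card_eq, Fintype.card_fin])
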